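/- Suppose A is a symmetric monoidal category containing an object Ξ with γ_{Ξ,Ξ} ≠ id_{Ξ⊗Ξ}, where γ is the symmetry. Let ξ be the ℤ-indexed family with ξ_0 = γ_{Ξ,Ξ} and ξ_k = id_{Ξ⊗Ξ} for k ≠ 0. Then there is no isomorphism in Inv(A) from (Ξ⊗Ξ, ξ) to §(Ξ⊗Ξ, ξ), where §(A,s) = (A,(s_{k−1})). In fact, any morphism f : (Ξ⊗Ξ, ξ) → §(Ξ⊗Ξ, ξ) satisfies f ∘ γ_{Ξ,Ξ} = f and γ_{Ξ,Ξ} ∘ f = f, hence f is neither monic nor epic. -/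

import Mathlib

/-!
The shift moves `γ` from index `0` of the source to index `1` of the target, so the
morphism conditions at `k = 0` and `k = 1` each compare `γ` with an identity: they say
`γ ∘ f = f` and `f ∘ γ = f`. As `γ ≠ id`, `f` can be cancelled on neither side.
-/

open CategoryTheory

universe v u

/-- An object with involutions: an object together with a `ℤ`-indexed family of
involutive automorphisms. -/
structure InvObj (A : Type u) [Category.{v} A] : Type max u v where
  obj : A
  s : ℤ → (obj ⟶ obj)
  sq : ∀ k : ℤ, s k ≫ s k = 𝟙 obj

variable {A : Type u} [Category.{v} A]

/-- `f` is a morphism of objects with involutions from `X` to `Y`. -/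
def IsInvHom (X Y : InvObj A) (f : X.obj ⟶ Y.obj) : Prop :=
  ∀ k : ℤ, X.s k ≫ f ≫ Y.s k = f

theorem IsInvHom.comm {X Y : InvObj A} {f : X.obj ⟶ Y.obj} (h : IsInvHom X Y f) (k : ℤ) :
    X.s k ≫ f = f ≫ Y.s k := by
  calc X.s k ≫ f = X.s k ≫ f ≫ 𝟙 Y.obj := by simp
    _ = X.s k ≫ f ≫ Y.s k ≫ Y.s k := by rw [Y.sq k]
    _ = (X.s k ≫ f ≫ Y.s k) ≫ Y.s k := by simp
    _ = f ≫ Y.s k := by rw [h k]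

theorem isInvHom_of_comm {X Y : InvObj A} {f : X.obj ⟶ Y.obj}
    (h : ∀ k : ℤ, X.s k ≫ f = f ≫ Y.s k) : IsInvHom X Y f := fun k => by
  rw [← Category.assoc, h k, Category.assoc, Y.sq k, Category.comp_id]

theorem isInvHom_id (X : InvObj A) : IsInvHom X X (𝟙 X.obj) := fun k => by
  rw [Category.id_comp]; exact X.sq k

theorem IsInvHom.comp {X Y Z : InvObj A} {f : X.obj ⟶ Y.obj} {g : Y.obj ⟶ Z.obj}
    (hf : IsInvHom X Y f) (hg : IsInvHom Y Z g) : IsInvHom X Z (f ≫ g) :=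
  isInvHom_of_comm fun k => by
    rw [← Category.assoc, hf.comm k, Category.assoc, hg.comm k, Category.assoc]

/-- The category of objects with involutions, with composition and identities
inherited from `A`. -/
instance : Category (InvObj A) where
  Hom X Y := {f : X.obj ⟶ Y.obj // IsInvHom X Y f}
  id X := ⟨𝟙 X.obj, isInvHom_id X⟩
  comp f g := ⟨f.1 ≫ g.1, f.2.comp g.2⟩
  id_comp f := Subtype.ext (Category.id_comp f.1)
  comp_id f := Subtype.ext (Category.comp_id f.1)
  assoc f g h := Subtype.ext (Category.assoc f.1 g.1 h.1)
open MonoidalCategory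

variable [MonoidalCategory A]

/-- The tensor product of objects with involutions, with the involutions given
componentwise. -/
def tensorInv (X Y : InvObj A) : InvObj A where
  obj := X.obj ⊗ Y.obj
  s k := X.s k ⊗ₘ Y.s k
  sq k := by rw [tensorHom_comp_tensorHom, X.sq k, Y.sq k, id_tensorHom_id]

/-- The unit object with involutions `(1, (id_1))`. -/
def unitInv (A : Type u) [Category.{v} A] [MonoidalCategory A] : InvObj A where
  obj := 𝟙_ A
  s _ := 𝟙 (𝟙_ A)
  sq _ := Category.id_comp _

/-- The tensor product of morphisms of objects with involutions. -/
def tensorHomInv {X X' Y Y' : InvObj A} (f : X ⟶ Y) (g : X' ⟶ Y') :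
    tensorInv X X' ⟶ tensorInv Y Y' :=
  ⟨f.1 ⊗ₘ g.1, fun k => by
    show (X.s k ⊗ₘ X'.s k) ≫ (f.1 ⊗ₘ g.1) ≫ (Y.s k ⊗ₘ Y'.s k) = f.1 ⊗ₘ g.1
    rw [tensorHom_comp_tensorHom, tensorHom_comp_tensorHom, f.2 k, g.2 k]⟩

/-- The shift of an object with involutions: `§_n (A,s) = (A, (s_{k-n}))`. -/
def shiftObj (n : ℤ) (X : InvObj A) : InvObj A where
  obj := X.obj
  s k := X.s (k - n)
  sq k := X.sq (k - n)

/-- The shift functor `§_n : Inv(A) ⥤ Inv(A)`, acting as the identity on morphisms. -/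
def shiftFunctor (n : ℤ) : InvObj A ⥤ InvObj A where
  obj := shiftObj n
  map f := ⟨f.1, fun k => f.2 (k - n)⟩
  map_id _ := rfl
  map_comp _ _ := rfl

variable [SymmetricCategory A]

/-- The object with involutions `(Ξ ⊗ Ξ, ξ)` with `ξ_0` the symmetry and `ξ_k = id`
otherwise. -/
def xiObj (Ξ : A) : InvObj A where
  obj := Ξ ⊗ Ξ
  s k := if k = 0 then (β_ Ξ Ξ).hom else 𝟙 (Ξ ⊗ Ξ)
  sq k := by by_cases h : k = 0 <;> simp [h]

theorem not_mono_of_comp_eq_self {C : Type*} [Category C] {X Y : C} {f : X ⟶ Y} {g : X ⟶ X}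
    (hg : g ≠ 𝟙 X) (hgf : g ≫ f = f) : ¬Mono f := fun _ =>
  hg <| (cancel_mono f).1 (hgf.trans (Category.id_comp f).symm)

theorem not_epi_of_comp_eq_self {C : Type*} [Category C] {X Y : C} {f : X ⟶ Y} {g : Y ⟶ Y}
    (hg : g ≠ 𝟙 Y) (hfg : f ≫ g = f) : ¬Epi f := fun _ =>
  hg <| (cancel_epi f).1 (hfg.trans (Category.comp_id f).symm)

theorem InvObj.isIso_hom_val {C : Type*} [Category C] {X Y : InvObj C} (e : X ≅ Y) :
    IsIso e.hom.1 :=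
  ⟨e.inv.1, congrArg Subtype.val e.hom_inv_id, congrArg Subtype.val e.inv_hom_id⟩

theorem xiObj_s_zero (Ξ : A) : (xiObj Ξ).s 0 = (β_ Ξ Ξ).hom := rfl

theorem xiObj_s_of_ne_zero (Ξ : A) {k : ℤ} (hk : k ≠ 0) : (xiObj Ξ).s k = 𝟙 (Ξ ⊗ Ξ) :=
  if_neg hk

section

variable {Ξ : A} {f : Ξ ⊗ Ξ ⟶ Ξ ⊗ Ξ} (hf : IsInvHom (xiObj Ξ) (shiftObj 1 (xiObj Ξ)) f)
include hf

theorem IsInvHom.braiding_comp_eq_of_xiObj_shift : (β_ Ξ Ξ).hom ≫ f = f := by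
  have h : (xiObj Ξ).s 0 ≫ f = f ≫ (xiObj Ξ).s (0 - 1) := hf.comm 0
  rw [xiObj_s_zero, xiObj_s_of_ne_zero Ξ (by decide)] at h
  exact h.trans (Category.comp_id f)

theorem IsInvHom.comp_braiding_eq_of_xiObj_shift : f ≫ (β_ Ξ Ξ).hom = f := by
  have h : (xiObj Ξ).s 1 ≫ f = f ≫ (xiObj Ξ).s (1 - 1) := hf.comm 1
  rw [sub_self, xiObj_s_zero, xiObj_s_of_ne_zero Ξ one_ne_zero] at h
  exact h.symm.trans (Category.id_comp f)

end

/-- if `γ_{Ξ,Ξ} ≠ id`, then every morphism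
`f : (Ξ⊗Ξ, ξ) ⟶ §(Ξ⊗Ξ, ξ)` in `Inv(A)` satisfies `f ∘ γ = f` and `γ ∘ f = f`, hence is
neither monic nor epic; in particular there is no isomorphism `(Ξ⊗Ξ, ξ) ≅ §(Ξ⊗Ξ, ξ)`. -/
theorem no_iso_to_shift (Ξ : A) (h : (β_ Ξ Ξ).hom ≠ 𝟙 (Ξ ⊗ Ξ)) :
    (∀ f : xiObj Ξ ⟶ shiftObj 1 (xiObj Ξ),
      (β_ Ξ Ξ).hom ≫ f.1 = f.1 ∧ f.1 ≫ (β_ Ξ Ξ).hom = f.1 ∧ ¬Mono f.1 ∧ ¬Epi f.1) ∧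
    IsEmpty (xiObj Ξ ≅ shiftObj 1 (xiObj Ξ)) := by
  have absorbs (f : xiObj Ξ ⟶ shiftObj 1 (xiObj Ξ)) :
      (β_ Ξ Ξ).hom ≫ f.1 = f.1 ∧ f.1 ≫ (β_ Ξ Ξ).hom = f.1 ∧ ¬Mono f.1 ∧ ¬Epi f.1 :=
    have hl := f.2.braiding_comp_eq_of_xiObj_shift
    have hr := f.2.comp_braiding_eq_of_xiObj_shift
    ⟨hl, hr, not_mono_of_comp_eq_self h hl, not_epi_of_comp_eq_self h hr⟩
  refine ⟨absorbs, ⟨fun e => (absorbs e.hom).2.2.1 ?_⟩⟩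
  have := InvObj.isIso_hom_val e
  infer_instance
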